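/- Under the hypotheses of the previous theorem (D compact, D = closure(D°), μ_d(∂D) = 0, {f₁,…,f_k} a non-overlapping inside family of injective contractions whose attractor E has μ_d(E) = 0), the generator of the dissection of D is unique: if X and Z are both compact sets equal to the closures of their interiors generating dissections of D, then X = Z. -/

import Mathlib

open MeasureTheory Metric Set Filter Topology
open scoped symmDiff

/-!
A point of `X \ Z` lies in `D = Z ∪ ⋃ fᵢ Z`, hence in some `fᵢ z` with `z ∉ Z`; off the null
overlaps `X ∩ fᵢ X` we also have `z ∉ X`. So `X ∆ Z` is a.e. contained in its image under the
Hutchinson operator `F s = ⋃ fᵢ s`, and since Lipschitz maps preserve null sets, in `Fⁿ D` for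
every `n`. The `fᵢ` contract uniformly and `F E ⊆ E`, so `Fⁿ D` lies in the closed
`Kⁿ R`-neighbourhood of the compact null set `E`, whose measure tends to `0`. Thus `X = Z` a.e.,
and regular closed sets that agree a.e. are equal.
-/

theorem LipschitzOnWith.addHaar_image_eq_zero {E : Type*} [NormedAddCommGroup E]
    [NormedSpace ℝ E] [FiniteDimensional ℝ E] [MeasurableSpace E] [BorelSpace E]
    (μ : Measure E) [μ.IsAddHaarMeasure] {K : NNReal} {f : E → E} {s : Set E}
    (hf : LipschitzOnWith K f s) (hs : μ s = 0) : μ (f '' s) = 0 := by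
  have hHs : μH[Module.finrank ℝ E] s = 0 :=
    Measure.absolutelyContinuous_isAddHaarMeasure _ μ hs
  have hHfs : μH[Module.finrank ℝ E] (f '' s) = 0 := by
    simpa [hHs] using hf.hausdorffMeasure_image_le (Nat.cast_nonneg (Module.finrank ℝ E))
  exact Measure.absolutelyContinuous_isAddHaarMeasure μ _ hHfs

theorem exists_lipschitzWith_lt_one_of_contractingWith {ι α : Type*} [Fintype ι]
    [EMetricSpace α] {r : ι → NNReal} {f : ι → α → α}
    (hf : ∀ i, ContractingWith (r i) (f i)) :
    ∃ K < 1, ∀ i, LipschitzWith K (f i) :=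
  ⟨Finset.univ.sup r, (Finset.sup_lt_iff zero_lt_one).2 fun i _ => (hf i).1,
    fun i => (hf i).2.weaken (Finset.le_sup (Finset.mem_univ i))⟩

theorem subset_of_ae_le_of_eq_closure_interior {α : Type*} [TopologicalSpace α]
    [MeasurableSpace α] {μ : Measure α} [μ.IsOpenPosMeasure] {s t : Set α}
    (hs : s = closure (interior s)) (ht : IsClosed t) (h : s ≤ᵐ[μ] t) : s ⊆ t := by
  have hnull : μ (interior s \ t) = 0 :=
    measure_mono_null (sdiff_subset_sdiff_left interior_subset) (ae_le_set.1 h)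
  have hint : interior s ⊆ t :=
    sdiff_eq_empty.1 ((isOpen_interior.sdiff ht).eq_empty_of_measure_zero hnull)
  exact hs.trans_subset (closure_minimal hint ht)

theorem eq_of_ae_eq_of_eq_closure_interior {α : Type*} [TopologicalSpace α]
    [MeasurableSpace α] {μ : Measure α} [μ.IsOpenPosMeasure] {s t : Set α}
    (hs : s = closure (interior s)) (ht : t = closure (interior t)) (h : s =ᵐ[μ] t) : s = t := by
  have closed_of_eq {u : Set α} (hu : u = closure (interior u)) : IsClosed u := by
    rw [hu]
    exact isClosed_closure
  exact (subset_of_ae_le_of_eq_closure_interior hs (closed_of_eq ht) h.le).antisymm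
    (subset_of_ae_le_of_eq_closure_interior ht (closed_of_eq hs) h.symm.le)

def hutchinson {ι α : Type*} (f : ι → α → α) (s : Set α) : Set α :=
  ⋃ i, f i '' s

section Hutchinson

variable {ι α : Type*} {f : ι → α → α}

theorem hutchinson_mono (f : ι → α → α) : Monotone (hutchinson f) :=
  fun _ _ hst => iUnion_mono fun _ => image_mono hst

theorem diff_subset_hutchinson_diff_union {s t : Set α} (h : s ⊆ t ∪ hutchinson f t) :
    s \ t ⊆ hutchinson f (t \ s) ∪ ⋃ i, s ∩ f i '' s := by
  rintro x ⟨hxs, hxt⟩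
  obtain ⟨i, y, hyt, rfl⟩ := mem_iUnion.1 ((h hxs).resolve_left hxt)
  by_cases hys : y ∈ s
  · exact Or.inr (mem_iUnion.2 ⟨i, hxs, y, hys, rfl⟩)
  · exact Or.inl (mem_iUnion.2 ⟨i, y, ⟨hyt, hys⟩, rfl⟩)

variable [MeasurableSpace α] {μ : Measure α}

theorem diff_ae_le_hutchinson_diff [Countable ι] {s t : Set α} (h : s ⊆ t ∪ hutchinson f t)
    (hs : ∀ i, μ (s ∩ f i '' s) = 0) : s \ t ≤ᵐ[μ] hutchinson f (t \ s) :=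
  ae_le_set.2 (measure_mono_null (sdiff_subset_iff.2 (diff_subset_hutchinson_diff_union h))
    (measure_iUnion_null hs))

theorem symmDiff_ae_le_hutchinson [Countable ι] {s t : Set α}
    (h : s ∪ hutchinson f s = t ∪ hutchinson f t)
    (hs : ∀ i, μ (s ∩ f i '' s) = 0) (ht : ∀ i, μ (t ∩ f i '' t) = 0) :
    s ∆ t ≤ᵐ[μ] hutchinson f (s ∆ t) := by
  have hst := diff_ae_le_hutchinson_diff (subset_union_left.trans h.subset) hs
  have hts := diff_ae_le_hutchinson_diff (subset_union_left.trans h.symm.subset) ht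
  refine (hst.union hts).trans (LE.le.eventuallyLE (union_subset ?_ ?_))
  · exact hutchinson_mono f (subset_union_right : t \ s ⊆ s ∆ t)
  · exact hutchinson_mono f (subset_union_left : s \ t ⊆ s ∆ t)

theorem hutchinson_ae_mono [Countable ι] (hf : ∀ i s, μ s = 0 → μ (f i '' s) = 0)
    {s t : Set α} (h : s ≤ᵐ[μ] t) : hutchinson f s ≤ᵐ[μ] hutchinson f t := by
  refine ae_le_set.2 (measure_mono_null ?_ (measure_iUnion_null fun i => hf i _ (ae_le_set.1 h)))
  rintro x ⟨hxs, hxt⟩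
  obtain ⟨i, y, hys, rfl⟩ := mem_iUnion.1 hxs
  exact mem_iUnion.2 ⟨i, y, ⟨hys, fun hyt => hxt (mem_iUnion.2 ⟨i, y, hyt, rfl⟩)⟩, rfl⟩

theorem ae_le_hutchinson_iterate [Countable ι] (hf : ∀ i s, μ s = 0 → μ (f i '' s) = 0)
    {s : Set α} (h : s ≤ᵐ[μ] hutchinson f s) (n : ℕ) : s ≤ᵐ[μ] (hutchinson f)^[n] s := by
  induction n with
  | zero => exact EventuallyLE.rfl
  | succ n ih =>
    rw [Function.iterate_succ_apply']
    exact h.trans (hutchinson_ae_mono hf ih)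

theorem measure_eq_zero_of_ae_le_hutchinson [Countable ι]
    (hf : ∀ i s, μ s = 0 → μ (f i '' s) = 0) {s D : Set α} (h : s ≤ᵐ[μ] hutchinson f s)
    (hsD : s ⊆ D) (hD : Tendsto (fun n => μ ((hutchinson f)^[n] D)) atTop (𝓝 0)) :
    μ s = 0 := by
  have hle : ∀ n, μ s ≤ μ ((hutchinson f)^[n] D) := fun n =>
    measure_mono_ae <| (ae_le_hutchinson_iterate hf h n).trans
      ((hutchinson_mono f).iterate n hsD).eventuallyLE
  exact le_antisymm (ge_of_tendsto' hD hle) zero_le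

end Hutchinson

section Contraction

variable {ι α : Type*} [MetricSpace α] {f : ι → α → α} {K : NNReal} {E : Set α}

theorem hutchinson_cthickening_subset (hf : ∀ i, LipschitzWith K (f i)) (hE : IsCompact E)
    (hfE : hutchinson f E ⊆ E) {t : ℝ} (ht : 0 ≤ t) :
    hutchinson f (cthickening t E) ⊆ cthickening (K * t) E := by
  simp only [hutchinson, hE.cthickening_eq_biUnion_closedBall ht, image_iUnion₂,
    iUnion_subset_iff]
  intro i x hx
  exact ((hf i).mapsTo_closedBall x t).image_subset.trans
    (closedBall_subset_cthickening (hfE (mem_iUnion.2 ⟨i, x, hx, rfl⟩)) _)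

theorem hutchinson_iterate_subset_cthickening (hf : ∀ i, LipschitzWith K (f i))
    (hE : IsCompact E) (hfE : hutchinson f E ⊆ E) {D : Set α} {R : ℝ} (hR : 0 ≤ R)
    (hD : D ⊆ cthickening R E) (n : ℕ) :
    (hutchinson f)^[n] D ⊆ cthickening (K ^ n * R) E := by
  induction n with
  | zero => simpa using hD
  | succ n ih =>
    rw [Function.iterate_succ_apply', pow_succ', mul_assoc]
    exact (hutchinson_mono f ih).trans
      (hutchinson_cthickening_subset hf hE hfE (by positivity))

theorem tendsto_measure_hutchinson_iterate [MeasurableSpace α] [OpensMeasurableSpace α]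
    [ProperSpace α] {μ : Measure α} [IsFiniteMeasureOnCompacts μ]
    (hf : ∀ i, LipschitzWith K (f i)) (hK : K < 1) (hE : IsCompact E) (hEne : E.Nonempty)
    (hfE : hutchinson f E ⊆ E) (hE0 : μ E = 0) {D : Set α} (hD : Bornology.IsBounded D) :
    Tendsto (fun n => μ ((hutchinson f)^[n] D)) atTop (𝓝 0) := by
  obtain ⟨e, he⟩ := hEne
  obtain ⟨R, hR, hDR⟩ := hD.subset_closedBall_lt 0 e
  have hradius : Tendsto (fun n : ℕ => (K : ℝ) ^ n * R) atTop (𝓝 0) := by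
    simpa using (tendsto_pow_atTop_nhds_zero_of_lt_one K.coe_nonneg hK).mul_const R
  have hthick := hE0 ▸ (tendsto_measure_cthickening_of_isCompact (μ := μ) hE).comp hradius
  refine tendsto_of_tendsto_of_tendsto_of_le_of_le tendsto_const_nhds hthick
    (fun n => zero_le) fun n => measure_mono ?_
  exact hutchinson_iterate_subset_cthickening hf hE hfE hR.le
    (hDR.trans (closedBall_subset_cthickening he R)) n

end Contraction

theorem generator_of_dissection_unique_general {d k : ℕ}
    (D : Set (EuclideanSpace ℝ (Fin d))) (hDc : IsCompact D)
    (f : Fin k → EuclideanSpace ℝ (Fin d) → EuclideanSpace ℝ (Fin d))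
    (r : Fin k → NNReal) (hf : ∀ i, ContractingWith (r i) (f i))
    (E : Set (EuclideanSpace ℝ (Fin d))) (hE : E.Nonempty) (hEc : IsCompact E)
    (hEfix : E = ⋃ i, f i '' E) (hEvol : volume E = 0)
    (X Z : Set (EuclideanSpace ℝ (Fin d)))
    (hXcl : X = closure (interior X))
    (hXcover : D = X ∪ ⋃ i, f i '' X)
    (hXfi : ∀ i, volume (X ∩ f i '' X) = 0)
    (hZcl : Z = closure (interior Z))
    (hZcover : D = Z ∪ ⋃ i, f i '' Z)
    (hZfi : ∀ i, volume (Z ∩ f i '' Z) = 0) :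
    X = Z := by
  obtain ⟨K, hK, hfK⟩ := exists_lipschitzWith_lt_one_of_contractingWith hf
  have hnull : ∀ i s, volume s = 0 → volume (f i '' s) = 0 := fun i _ hs =>
    (hfK i).lipschitzOnWith.addHaar_image_eq_zero volume hs
  have hXZ : X ∆ Z ≤ᵐ[volume] hutchinson f (X ∆ Z) :=
    symmDiff_ae_le_hutchinson (hXcover.symm.trans hZcover) hXfi hZfi
  have hXZD : X ∆ Z ⊆ D := symmDiff_subset_union.trans
    (union_subset (hXcover ▸ subset_union_left) (hZcover ▸ subset_union_left))
  have hDlim := tendsto_measure_hutchinson_iterate hfK hK hEc hE hEfix.ge hEvol hDc.isBounded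
  exact eq_of_ae_eq_of_eq_closure_interior hXcl hZcl
    (measure_symmDiff_eq_zero_iff.1 (measure_eq_zero_of_ae_le_hutchinson hnull hXZ hXZD hDlim))

/-- For a non-overlapping inside family of injective contractions whose attractor `E`
has measure zero, the generator of a dissection of `D` is unique. -/
theorem generator_of_dissection_unique {d k : ℕ}
    (D : Set (EuclideanSpace ℝ (Fin d))) (hDc : IsCompact D)
    (hDcl : D = closure (interior D)) (hfr : volume (frontier D) = 0)
    (f : Fin k → EuclideanSpace ℝ (Fin d) → EuclideanSpace ℝ (Fin d))
    (r : Fin k → NNReal) (hf : ∀ i, ContractingWith (r i) (f i))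
    (hinj : ∀ i, Function.Injective (f i))
    (hin : ∀ i, f i '' D ⊆ D)
    (hnov : ∀ i j, i ≠ j → volume (f i '' D ∩ f j '' D) = 0)
    (E : Set (EuclideanSpace ℝ (Fin d))) (hE : E.Nonempty) (hEc : IsCompact E)
    (hEfix : E = ⋃ i, f i '' E) (hEvol : volume E = 0)
    (X Z : Set (EuclideanSpace ℝ (Fin d)))
    (hXc : IsCompact X) (hXcl : X = closure (interior X))
    (hXcover : D = X ∪ ⋃ i, f i '' X)
    (hXfi : ∀ i, volume (X ∩ f i '' X) = 0)
    (hXfifj : ∀ i j, i ≠ j → volume (f i '' X ∩ f j '' X) = 0)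
    (hZc : IsCompact Z) (hZcl : Z = closure (interior Z))
    (hZcover : D = Z ∪ ⋃ i, f i '' Z)
    (hZfi : ∀ i, volume (Z ∩ f i '' Z) = 0)
    (hZfifj : ∀ i j, i ≠ j → volume (f i '' Z ∩ f j '' Z) = 0) :
    X = Z :=
  generator_of_dissection_unique_general D hDc f r hf E hE hEc hEfix hEvol X Z hXcl hXcover hXfi
    hZcl hZcover hZfi
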